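/- (Uniqueness) Suppose (Proc, Lab, →fb, ι1) and (Proc, Lab, →fb, ι2) are two pre-reversible LTSIs with the same underlying combined LTS. Then they determine the same event equivalence ∼, the same core independence relation ⌣ on events, the same causal ordering ≤ on forward events, and the same conflict relation # on forward events. -/
import Mathlib


namespace RLTS

universe u v

/-- Transitions over processes P and labels L; `fwd? = true` means forward. -/
structure Tr (P : Type u) (L : Type v) : Type (max u v) where
  src : P
  fwd? : Bool
  lbl : L
  tgt : P

variable {P : Type u} {L : Type v}

/-- The reverse of a transition. -/
def Tr.rev (t : Tr P L) : Tr P L := ⟨t.tgt, !t.fwd?, t.lbl, t.src⟩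

/-- A combined LTS: forward and backward transition relations satisfying the Loop Lemma. -/
structure CLTS (P : Type u) (L : Type v) : Type (max u v) where
  fwd : P → L → P → Prop
  bwd : P → L → P → Prop
  loop : ∀ X a Y, fwd X a Y ↔ bwd Y a X

/-- An LTS with independence: a combined LTS with an irreflexive symmetric
independence relation on transitions. -/
structure LTSI (P : Type u) (L : Type v) extends CLTS P L : Type (max u v) where
  ind : Tr P L → Tr P L → Prop
  ind_irrefl : ∀ t, ¬ ind t t
  ind_symm : ∀ t u, ind t u → ind u t

/-- Validity of a transition in an LTSI. -/
def LTSI.Valid (M : LTSI P L) (t : Tr P L) : Prop :=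
  if t.fwd? then M.fwd t.src t.lbl t.tgt else M.bwd t.src t.lbl t.tgt

/-- A commuting square: t, u coinitial; u', t' the opposite cofinal sides. -/
def LTSI.Square (M : LTSI P L) (t u u' t' : Tr P L) : Prop :=
  M.Valid t ∧ M.Valid u ∧ M.Valid u' ∧ M.Valid t' ∧
  t.src = u.src ∧ u'.src = t.tgt ∧ t'.src = u.tgt ∧ u'.tgt = t'.tgt ∧
  u'.lbl = u.lbl ∧ u'.fwd? = u.fwd? ∧ t'.lbl = t.lbl ∧ t'.fwd? = t.fwd?

/-- Square property. -/
def LTSI.SP (M : LTSI P L) : Prop :=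
  ∀ t u : Tr P L, M.Valid t → M.Valid u → t.src = u.src → M.ind t u →
    ∃ u' t' : Tr P L, M.Square t u u' t'

/-- Backward transitions are independent. -/
def LTSI.BTI (M : LTSI P L) : Prop :=
  ∀ t u : Tr P L, M.Valid t → M.Valid u → t.src = u.src →
    t.fwd? = false → u.fwd? = false → t ≠ u → M.ind t u

/-- Well-foundedness: no infinite reverse computation. -/
def LTSI.WF (M : LTSI P L) : Prop :=
  ∀ (Ps : ℕ → P) (as : ℕ → L), ¬ ∀ i : ℕ, M.fwd (Ps (i + 1)) (as i) (Ps i)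

/-- Propagation of coinitial independence. -/
def LTSI.PCI (M : LTSI P L) : Prop :=
  ∀ t u u' t' : Tr P L, M.Square t u u' t' → M.ind t u → M.ind u' t.rev

/-- Pre-reversible LTSI. -/
def LTSI.PreRev (M : LTSI P L) : Prop := M.SP ∧ M.BTI ∧ M.WF ∧ M.PCI

/-- Event equivalence: the smallest equivalence such that in a commuting square
with independent sides, `t ∼ t'` and `reverse t ∼ t'`. -/
inductive LTSI.EvEq (M : LTSI P L) : Tr P L → Tr P L → Prop where
  | refl (t : Tr P L) : LTSI.EvEq M t t
  | symm {t u : Tr P L} : LTSI.EvEq M t u → LTSI.EvEq M u t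
  | trans {t u v : Tr P L} : LTSI.EvEq M t u → LTSI.EvEq M u v → LTSI.EvEq M t v
  | sq {t u u' t' : Tr P L} : M.Square t u u' t' → M.ind t u → LTSI.EvEq M t t'
  | sqrev {t u u' t' : Tr P L} : M.Square t u u' t' → M.ind t u → LTSI.EvEq M t.rev t'

/-- Independence respects events. -/
def LTSI.IRE (M : LTSI P L) : Prop :=
  ∀ t t' u : Tr P L, M.EvEq t t' → M.ind t' u → M.ind t u

/-- Reversing preserves independence. -/
def LTSI.RPI (M : LTSI P L) : Prop :=
  ∀ t t' : Tr P L, M.ind t t' → M.ind t.rev t'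

/-- Paths of composable valid transitions. -/
inductive LTSI.Path (M : LTSI P L) : P → P → Type (max u v) where
  | nil (X : P) : LTSI.Path M X X
  | cons {X Y Z : P} (t : Tr P L) (hv : M.Valid t) (hs : t.src = X) (ht : t.tgt = Y)
      (r : LTSI.Path M Y Z) : LTSI.Path M X Z

open Classical in
/-- Signed number of occurrences in a path of the event represented by `e`. -/
noncomputable def LTSI.Path.count {M : LTSI P L} (e : Tr P L) :
    ∀ {X Y : P}, M.Path X Y → ℤ
  | _, _, .nil _ => 0
  | _, _, .cons t _ _ _ r =>
      (if M.EvEq t e then (1 : ℤ) else if M.EvEq t e.rev then (-1 : ℤ) else 0)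
        + LTSI.Path.count e r

/-- Membership of a transition in a path. -/
def LTSI.Path.Mem {M : LTSI P L} (u : Tr P L) : ∀ {X Y : P}, M.Path X Y → Prop
  | _, _, .nil _ => False
  | _, _, .cons t _ _ _ r => u = t ∨ LTSI.Path.Mem u r

/-- Length of a path. -/
def LTSI.Path.length {M : LTSI P L} : ∀ {X Y : P}, M.Path X Y → ℕ
  | _, _, .nil _ => 0
  | _, _, .cons _ _ _ _ r => LTSI.Path.length r + 1

/-- A forward-only path. -/
def LTSI.Path.FwdOnly {M : LTSI P L} : ∀ {X Y : P}, M.Path X Y → Prop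
  | _, _, .nil _ => True
  | _, _, .cons t _ _ _ r => t.fwd? = true ∧ LTSI.Path.FwdOnly r

/-- X cannot perform a backward transition. -/
def LTSI.Rooted (M : LTSI P L) (X : P) : Prop := ∀ (a : L) (Y : P), ¬ M.bwd X a Y

/-- e represents a forward event. -/
def LTSI.FwdEvent (M : LTSI P L) (e : Tr P L) : Prop := M.Valid e ∧ e.fwd? = true

/-- Causal ordering on (representatives of) forward events. -/
def LTSI.CausLE (M : LTSI P L) (e e' : Tr P L) : Prop :=
  ∀ (O Z : P) (r : M.Path O Z), M.Rooted O →
    0 < LTSI.Path.count e' r → 0 < LTSI.Path.count e r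

/-- Strict causal ordering. -/
def LTSI.EvLT (M : LTSI P L) (e e' : Tr P L) : Prop :=
  M.CausLE e e' ∧ ¬ M.EvEq e e'

/-- Conflict on (representatives of) forward events. -/
def LTSI.Conflict (M : LTSI P L) (e e' : Tr P L) : Prop :=
  ∀ (O Z : P) (r : M.Path O Z), M.Rooted O →
    ¬ (0 < LTSI.Path.count e r ∧ 0 < LTSI.Path.count e' r)

/-- Core independence on events. -/
def LTSI.CoreInd (M : LTSI P L) (e e' : Tr P L) : Prop :=
  ∃ t t' : Tr P L, M.EvEq t e ∧ M.EvEq t' e' ∧ t.src = t'.src ∧ M.ind t t'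

/-- Composable events. -/
def LTSI.EvComposable (M : LTSI P L) (e e' : Tr P L) : Prop :=
  ∃ t t' : Tr P L, M.EvEq t e ∧ M.EvEq t' e' ∧ M.Valid t ∧ M.Valid t' ∧ t.tgt = t'.src

/-- e is an immediate predecessor of e'. -/
def LTSI.ImmPred (M : LTSI P L) (e e' : Tr P L) : Prop :=
  M.EvLT e e' ∧ ¬ ∃ f : Tr P L, M.FwdEvent f ∧ M.EvLT e f ∧ M.EvLT f e'

end RLTS

namespace RLTS

variable {P : Type u} {L : Type v}

theorem Tr.rev_rev (t : Tr P L) : t.rev.rev = t := by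
  cases t; simp [Tr.rev]

theorem LTSI.Valid.rev {M : LTSI P L} {t : Tr P L} (h : M.Valid t) : M.Valid t.rev := by
  unfold LTSI.Valid at h ⊢
  cases hb : t.fwd? <;> simp [Tr.rev, hb] at h ⊢
  · exact (M.loop _ _ _).mpr h
  · exact (M.loop _ _ _).mp h

theorem LTSI.Square.swap {M : LTSI P L} {t u u' t' : Tr P L}
    (h : M.Square t u u' t') : M.Square u t t' u' := by
  obtain ⟨v1, v2, v3, v4, e1, e2, e3, e4, l1, f1, l2, f2⟩ := h
  exact ⟨v2, v1, v4, v3, e1.symm, e3, e2, e4.symm, l2, f2, l1, f1⟩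

theorem LTSI.Square.rot {M : LTSI P L} {t u u' t' : Tr P L}
    (h : M.Square t u u' t') : M.Square t.rev u' u t'.rev := by
  obtain ⟨v1, v2, v3, v4, e1, e2, e3, e4, l1, f1, l2, f2⟩ := h
  refine ⟨v1.rev, v3, v2, v4.rev, ?_, ?_, ?_, ?_, ?_, ?_, ?_, ?_⟩ <;>
    simp [Tr.rev, e1, e2, e3, e4, l1, f1, l2, f2]

theorem valid_eq {M N : LTSI P L} (h : M.toCLTS = N.toCLTS) : M.Valid = N.Valid := by
  funext t; unfold LTSI.Valid; rw [show M.fwd = N.fwd from by rw [h],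
    show M.bwd = N.bwd from by rw [h]]

theorem square_eq {M N : LTSI P L} (h : M.toCLTS = N.toCLTS) :
    M.Square = N.Square := by
  funext t u u' t'; unfold LTSI.Square; rw [valid_eq h]

theorem rooted_iff {M N : LTSI P L} (h : M.toCLTS = N.toCLTS) (X : P) :
    M.Rooted X ↔ N.Rooted X := by
  unfold LTSI.Rooted; rw [show M.bwd = N.bwd from by rw [h]]

/-- Key step: independence of the two coinitial sides of a commuting square is
forced by `BTI` and `PCI`, hence transfers between LTSIs sharing the same LTS. -/
theorem ind_transfer {M N : LTSI P L} (hC : M.toCLTS = N.toCLTS)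
    (hMpci : M.PCI) (hNbti : N.BTI) (hNpci : N.PCI)
    {t u u' t' : Tr P L} (sq : M.Square t u u' t') (hi : M.ind t u) : N.ind t u := by
  have hV := valid_eq hC
  have hS := square_eq hC
  -- both sides backward: BTI applies directly
  have bb : ∀ {a b b' a' : Tr P L}, M.Square a b b' a' → M.ind a b →
      a.fwd? = false → b.fwd? = false → N.ind a b := by
    intro a b b' a' sq hi ha hb
    obtain ⟨v1, v2, _, _, e1, _⟩ := sq
    exact hNbti a b (hV ▸ v1) (hV ▸ v2) e1 ha hb
      (fun h => M.ind_irrefl b (h ▸ hi))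
  -- first side forward, second backward: rotate the square
  have fb : ∀ {a b b' a' : Tr P L}, M.Square a b b' a' → M.ind a b →
      a.fwd? = true → b.fwd? = false → N.ind a b := by
    intro a b b' a' sq hi ha hb
    have hrot := sq.rot
    have hi' : M.ind a.rev b' := M.ind_symm _ _ (hMpci _ _ _ _ sq hi)
    obtain ⟨v1, v2, v3, v4, e1, e2, e3, e4, l1, f1, l2, f2⟩ := sq
    have hN : N.ind a.rev b' := hNbti a.rev b' (hV ▸ v1.rev) (hV ▸ v3)
      (by simp [Tr.rev, e2]) (by simp [Tr.rev, ha]) (by rw [f1, hb])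
      (fun h => M.ind_irrefl b' (h ▸ hi'))
    have hfin := hNpci _ _ _ _ (hS ▸ hrot) hN
    rw [Tr.rev_rev] at hfin
    exact N.ind_symm _ _ hfin
  -- first side backward, second forward: swap
  have bf : ∀ {a b b' a' : Tr P L}, M.Square a b b' a' → M.ind a b →
      a.fwd? = false → b.fwd? = true → N.ind a b := by
    intro a b b' a' sq hi ha hb
    exact N.ind_symm _ _ (fb sq.swap (M.ind_symm _ _ hi) hb ha)
  cases ha : t.fwd? <;> cases hb : u.fwd?
  · exact bb sq hi ha hb
  · exact bf sq hi ha hb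
  · exact fb sq hi ha hb
  · -- both forward: rotate, then use the backward–forward case
    have hrot := sq.rot
    have hi' : M.ind t.rev u' := M.ind_symm _ _ (hMpci _ _ _ _ sq hi)
    have hN : N.ind t.rev u' := bf hrot hi' (by simp [Tr.rev, ha])
      (by rcases sq with ⟨_, _, _, _, _, _, _, _, _, f1, _⟩; rw [f1, hb])
    have hfin := hNpci _ _ _ _ (hS ▸ hrot) hN
    rw [Tr.rev_rev] at hfin
    exact N.ind_symm _ _ hfin

theorem evEq_mono {M N : LTSI P L} (hC : M.toCLTS = N.toCLTS)
    (hMpci : M.PCI) (hNbti : N.BTI) (hNpci : N.PCI)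
    {t u : Tr P L} (h : M.EvEq t u) : N.EvEq t u := by
  induction h with
  | refl t => exact .refl t
  | symm _ ih => exact .symm ih
  | trans _ _ ih1 ih2 => exact .trans ih1 ih2
  | sq hsq hi =>
      exact .sq (square_eq hC ▸ hsq) (ind_transfer hC hMpci hNbti hNpci hsq hi)
  | sqrev hsq hi =>
      exact .sqrev (square_eq hC ▸ hsq) (ind_transfer hC hMpci hNbti hNpci hsq hi)

theorem evEq_valid {M : LTSI P L} {t u : Tr P L} (h : M.EvEq t u) :
    t = u ∨ (M.Valid t ∧ M.Valid u) := by
  induction h with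
  | refl t => exact Or.inl rfl
  | symm _ ih =>
      rcases ih with h | ⟨h1, h2⟩
      · exact Or.inl h.symm
      · exact Or.inr ⟨h2, h1⟩
  | trans _ _ ih1 ih2 =>
      rcases ih1 with h | ⟨h1, h2⟩
      · rcases ih2 with h' | ⟨h1', h2'⟩
        · exact Or.inl (h.trans h')
        · exact Or.inr ⟨h ▸ h1', h2'⟩
      · rcases ih2 with h' | ⟨h1', h2'⟩
        · exact Or.inr ⟨h1, h' ▸ h2⟩
        · exact Or.inr ⟨h1, h2'⟩
  | sq hsq _ =>
      obtain ⟨v1, _, _, v4, _⟩ := hsq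
      exact Or.inr ⟨v1, v4⟩
  | sqrev hsq _ =>
      obtain ⟨v1, _, _, v4, _⟩ := hsq
      exact Or.inr ⟨v1.rev, v4⟩

def pathCast {M N : LTSI P L} (hV : M.Valid = N.Valid) :
    ∀ {X Y : P}, M.Path X Y → N.Path X Y
  | _, _, .nil X => .nil X
  | _, _, .cons t hv hs ht r => .cons t (hV ▸ hv) hs ht (pathCast hV r)

theorem count_cast {M N : LTSI P L} (hV : M.Valid = N.Valid)
    (hEq : ∀ a b : Tr P L, M.EvEq a b ↔ N.EvEq a b) (e : Tr P L)
    {X Y : P} (r : M.Path X Y) :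
    LTSI.Path.count e (pathCast hV r) = LTSI.Path.count e r := by
  classical
  induction r with
  | nil X => rfl
  | cons t hv hs ht r ih =>
      simp only [pathCast, LTSI.Path.count]
      rw [ih]
      congr 1
      exact if_congr (hEq t e).symm rfl (if_congr (hEq t e.rev).symm rfl rfl)

/-- **Uniqueness.** Two pre-reversible LTSIs with the same underlying combined LTS
determine the same event equivalence, the same core independence on events, the same
causal ordering on forward events, and the same conflict relation on forward events. -/
theorem uniqueness {P : Type u} {L : Type v}
    (M1 M2 : LTSI P L) (hsame : M1.toCLTS = M2.toCLTS)
    (h1 : M1.PreRev) (h2 : M2.PreRev) :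
    (∀ t u : Tr P L, M1.Valid t → M1.Valid u → (M1.EvEq t u ↔ M2.EvEq t u)) ∧
    (∀ e e' : Tr P L, M1.Valid e → M1.Valid e' → (M1.CoreInd e e' ↔ M2.CoreInd e e')) ∧
    (∀ e e' : Tr P L, M1.FwdEvent e → M1.FwdEvent e' →
      (M1.CausLE e e' ↔ M2.CausLE e e')) ∧
    (∀ e e' : Tr P L, M1.FwdEvent e → M1.FwdEvent e' →
      (M1.Conflict e e' ↔ M2.Conflict e e')) := by
  obtain ⟨hsp1, hbti1, hwf1, hpci1⟩ := h1
  obtain ⟨hsp2, hbti2, hwf2, hpci2⟩ := h2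
  have hV := valid_eq hsame
  have hEq : ∀ a b : Tr P L, M1.EvEq a b ↔ M2.EvEq a b := fun a b =>
    ⟨evEq_mono hsame hpci1 hbti2 hpci2, evEq_mono hsame.symm hpci2 hbti1 hpci1⟩
  have hEq' : ∀ a b : Tr P L, M2.EvEq a b ↔ M1.EvEq a b := fun a b => (hEq a b).symm
  refine ⟨fun t u _ _ => hEq t u, ?_, ?_, ?_⟩
  · -- core independence
    intro e e' hv hv'
    have key : ∀ (A B : LTSI P L), A.toCLTS = B.toCLTS → A.SP → A.PCI → B.BTI → B.PCI →
        (∀ a b : Tr P L, A.EvEq a b ↔ B.EvEq a b) →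
        A.Valid e → A.Valid e' → A.CoreInd e e' → B.CoreInd e e' := by
      intro A B hC hsp hpci hbti' hpci' heq hve hve' ⟨a, b, hae, hbe, hsrc, hind⟩
      have hva : A.Valid a := by
        rcases evEq_valid hae with h | ⟨h, _⟩
        · rw [h]; exact hve
        · exact h
      have hvb : A.Valid b := by
        rcases evEq_valid hbe with h | ⟨h, _⟩
        · rw [h]; exact hve'
        · exact h
      obtain ⟨c, d, hsq⟩ := hsp a b hva hvb hsrc hind
      exact ⟨a, b, (heq a e).mp hae, (heq b e').mp hbe, hsrc,
        ind_transfer hC hpci hbti' hpci' hsq hind⟩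
    constructor
    · exact key M1 M2 hsame hsp1 hpci1 hbti2 hpci2 hEq hv hv'
    · exact key M2 M1 hsame.symm hsp2 hpci2 hbti1 hpci1 hEq' (hV ▸ hv) (hV ▸ hv')
  · -- causal ordering
    intro e e' _ _
    constructor
    · intro h O Z r hO hpos
      have h1 := count_cast hV.symm hEq' e' r
      have h2 := count_cast hV.symm hEq' e r
      rw [← h2]
      exact h O Z (pathCast hV.symm r) ((rooted_iff hsame O).mpr hO) (h1 ▸ hpos)
    · intro h O Z r hO hpos
      have h1 := count_cast hV hEq e' r
      have h2 := count_cast hV hEq e r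
      rw [← h2]
      exact h O Z (pathCast hV r) ((rooted_iff hsame O).mp hO) (h1 ▸ hpos)
  · -- conflict
    intro e e' _ _
    constructor
    · intro h O Z r hO ⟨hp1, hp2⟩
      have h1 := count_cast hV.symm hEq' e r
      have h2 := count_cast hV.symm hEq' e' r
      exact h O Z (pathCast hV.symm r) ((rooted_iff hsame O).mpr hO)
        ⟨h1 ▸ hp1, h2 ▸ hp2⟩
    · intro h O Z r hO ⟨hp1, hp2⟩
      have h1 := count_cast hV hEq e r
      have h2 := count_cast hV hEq e' r
      exact h O Z (pathCast hV r) ((rooted_iff hsame O).mp hO)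
        ⟨h1 ▸ hp1, h2 ▸ hp2⟩

end RLTS
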